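/- arXiv:2310.03637 — 2 statements merged into one kernel-verified Lean document; each statement's English description precedes it below -/
import Mathlib

section
/- Let F_q be a finite field with q elements, let n ≥ 2, and let f_1,…,f_n ∈ F_q[x_1,…,x_{n−1},y] be a univariate keyed iterated polynomial system built from g_1,…,g_n ∈ F_q[x,y] and p, c ∈ F_q, with I = (f_1,…,f_n). Define ĝ_1 = g_1(p,y), ĝ_i = g_i(ĝ_{i−1}(y), y) for 2 ≤ i ≤ n−1, and ĝ_n = g_n(ĝ_{n−1}(y), y) − c in F_q[y]. Then I + (y^q − y) = (x_1 − ĝ_1, …, x_{n−1} − ĝ_{n−1}, gcd(ĝ_n, y^q − y)), this ideal is a radical ideal, and moreover I + (y^q − y) = I + (x_1^q − x_1, …, x_{n−1}^q − x_{n−1}, y^q − y). -/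
/-!
Let `Ψ : K[x_1, …, x_{n-1}, y] → K[y]` substitute `x_k ↦ ĝ_k(y)`; the embedding `K[y] → K[x, y]`
is a section of `Ψ`. Modulo the system, and modulo `(x_k - ĝ_k)_k`, every `f` is congruent to
`f(ĝ_1(y), …, ĝ_{n-1}(y), y)`: for the system this follows by induction along its triangular
shape. Hence, with `d = gcd(ĝ_n - c, y^q - y)`, both `I + (y^q - y)` and `(x_k - ĝ_k, d)` are
preimages under `Ψ` of ideals of `K[y]`, namely of `(ĝ_n - c, y^q - y) = (d)` and of `(d)`.
The preimage of `(d)` is radical because `d` divides the separable polynomial `y^q - y`, and it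
contains every `x_k^q - x_k`, since `Ψ` maps it to `ĝ_k^q - ĝ_k = ĝ_k(y^q) - ĝ_k(y)`, a multiple
of `y^q - y`.
-/

open MvPolynomial
open Fin.NatCast

/-! ### Term orders, initial ideals and Gröbner bases -/

/-- Total degree of an exponent vector. -/
def expDeg {σ : Type*} (a : σ →₀ ℕ) : ℕ := a.sum fun _ e => e

/-- Degree reverse lexicographic strict order on exponent vectors; `sig j i` reads
"`j` is strictly less significant than `i`".  `a` is DRL-smaller than `b` iff its total degree
is smaller, or the degrees agree and at the least significant variable where they differ the
exponent of `a` is larger. -/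
def drlLT {σ : Type*} (sig : σ → σ → Prop) (a b : σ →₀ ℕ) : Prop :=
  expDeg a < expDeg b ∨
    (expDeg a = expDeg b ∧ ∃ i, b i < a i ∧ ∀ j, sig j i → a j = b j)

/-- Lexicographic strict order on exponent vectors; `sig i j` reads "`i` is strictly less
significant than `j`".  `a` is LEX-smaller than `b` iff at the most significant variable where
they differ the exponent of `a` is smaller. -/
def lexLT {σ : Type*} (sig : σ → σ → Prop) (a b : σ →₀ ℕ) : Prop :=
  ∃ i, a i < b i ∧ ∀ j, sig i j → a j = b j

/-- Significance relation on `Fin N` for which the variable significance is strictly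
decreasing in the index (`x_0 > x_1 > ⋯`):  `sigDes i j` iff `i` is less significant
than `j`, i.e. `j < i`. -/
def sigDes {N : ℕ} (i j : Fin N) : Prop := j < i

/-- Significance relation on `Fin (N+1)` for a homogenized polynomial ring: the homogenization
variable `x_0` (index `0`) is the least significant variable, and among the remaining variables
the significance is strictly decreasing in the index. -/
def sigH {N : ℕ} (i j : Fin (N + 1)) : Prop := j ≠ 0 ∧ (i = 0 ∨ j < i)

/-- `a` is the leading monomial (exponent vector) of `f` w.r.t. the strict term order `lt`. -/
def IsLeadMono {σ K : Type*} [CommSemiring K] (lt : (σ →₀ ℕ) → (σ →₀ ℕ) → Prop)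
    (f : MvPolynomial σ K) (a : σ →₀ ℕ) : Prop :=
  a ∈ f.support ∧ ∀ b ∈ f.support, b ≠ a → lt b a

/-- The initial ideal of `I` w.r.t. the strict term order `lt`: the ideal generated by the
leading monomials of the nonzero elements of `I`. -/
noncomputable def initialIdeal {σ K : Type*} [CommSemiring K]
    (lt : (σ →₀ ℕ) → (σ →₀ ℕ) → Prop) (I : Ideal (MvPolynomial σ K)) :
    Ideal (MvPolynomial σ K) :=
  Ideal.span {mf | ∃ f ∈ I, f ≠ 0 ∧ ∃ a, IsLeadMono lt f a ∧ mf = monomial a (1 : K)}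

/-- `G` is a Gröbner basis of `I` w.r.t. the strict term order `lt`: `G ⊆ I` and the leading
monomials of the elements of `G` generate the initial ideal of `I`. -/
def IsGroebner {σ K : Type*} [CommSemiring K] (lt : (σ →₀ ℕ) → (σ →₀ ℕ) → Prop)
    (G : Set (MvPolynomial σ K)) (I : Ideal (MvPolynomial σ K)) : Prop :=
  G ⊆ (I : Set (MvPolynomial σ K)) ∧
    Ideal.span {mf | ∃ g ∈ G, g ≠ 0 ∧ ∃ a, IsLeadMono lt g a ∧ mf = monomial a (1 : K)}
      = initialIdeal lt I

/-! ### Saturation, projective zero loci, generic coordinates, homogenization -/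

/-- The saturation `I : (x_0, …, x_n)^∞ = ⋃_k (I : (x_0, …, x_n)^k)` of an ideal of a
polynomial ring with respect to the maximal ideal generated by all the variables. -/
noncomputable def maxSat {K : Type*} [Field K] {σ : Type*}
    (I : Ideal (MvPolynomial σ K)) : Ideal (MvPolynomial σ K) :=
  ⨆ k : ℕ, Submodule.colon I (((Ideal.span (Set.range (X : σ → MvPolynomial σ K))) ^ k :
    Ideal (MvPolynomial σ K)) : Set (MvPolynomial σ K))

/-- The projective zero locus of `I` over the algebraic closure of `K`. -/
noncomputable def projZerosBar {K : Type*} [Field K] {σ : Type*}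
    (I : Ideal (MvPolynomial σ K)) :
    Set (Projectivization (AlgebraicClosure K) (σ → AlgebraicClosure K)) :=
  {x | ∀ f ∈ I, eval x.rep (map (algebraMap K (AlgebraicClosure K)) f) = 0}

/-- `I` is in generic coordinates (w.r.t. the homogenization variable `v0`): its projective zero
locus over the algebraic closure is finite, and either it is empty or `X v0` is a nonzerodivisor
modulo the saturation `I^sat`. -/
def GenCoords {K : Type*} [Field K] {σ : Type*} (v0 : σ)
    (I : Ideal (MvPolynomial σ K)) : Prop :=
  (projZerosBar I).Finite ∧
    (projZerosBar I = ∅ ∨ ∀ f, X v0 * f ∈ maxSat I → f ∈ maxSat I)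

/-- Homogenization of `f` with respect to a new variable `x_0` placed at index `0`; the original
variables are shifted along `Fin.succ`. -/
noncomputable def homogPoly {K : Type*} [CommSemiring K] {q : ℕ}
    (f : MvPolynomial (Fin q) K) : MvPolynomial (Fin (q + 1)) K :=
  f.support.sum fun a =>
    monomial (Finsupp.single (0 : Fin (q + 1)) (f.totalDegree - expDeg a)
      + a.mapDomain Fin.succ) (f.coeff a)

/-- Dehomogenization: substitute `x_0 ↦ 1` and shift the remaining variables back. -/
noncomputable def dehomAlg {K : Type*} [Field K] (n : ℕ) :
    MvPolynomial (Fin (n + 1)) K →ₐ[K] MvPolynomial (Fin n) K :=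
  aeval fun i => Fin.cases (1 : MvPolynomial (Fin n) K) (fun j => X j) i

/-- An ideal of a polynomial ring is homogeneous if it contains all homogeneous components of
its elements. -/
def IsHomogIdeal {σ K : Type*} [CommSemiring K] (I : Ideal (MvPolynomial σ K)) : Prop :=
  ∀ f ∈ I, ∀ d : ℕ, MvPolynomial.homogeneousComponent d f ∈ I

/-- The highest degree homogeneous component `f^top` of a polynomial. -/
noncomputable def topComp {σ K : Type*} [CommSemiring K] (f : MvPolynomial σ K) :
    MvPolynomial σ K :=
  MvPolynomial.homogeneousComponent f.totalDegree f

/-! ### Keyed iterated polynomial systems -/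

/-- The univariate keyed iterated polynomial system attached to the bivariate polynomials
`g_1, …, g_n` (with `n = m + 1`, indexed here by `k = 0, …, m`), the plaintext `p` and the
ciphertext `c`.  The ambient ring is `K[x_1, …, x_m, y]`, where `x_j` has variable index
`j - 1` and `y` has variable index `m`; in the bivariate ring `K[x, y]`, `x` has index `0`
and `y` has index `1`.  Explicitly, `keyedF m g p c 0 = g 1 (p, y) - x 1`,
`keyedF m g p c k = g (k+1) (x k, y) - x (k+1)` for `1 ≤ k ≤ m - 1` and
`keyedF m g p c m = g (m+1) (x m, y) - c`. -/
noncomputable def keyedF {K : Type*} [Field K] (m : ℕ)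
    (g : ℕ → MvPolynomial (Fin 2) K) (p c : K) (k : ℕ) :
    MvPolynomial (Fin (m + 1)) K :=
  aeval ![if k = 0 then C p else X (((k - 1 : ℕ)) : Fin (m + 1)),
          X ((m : ℕ) : Fin (m + 1))] (g k)
    - (if k < m then X ((k : ℕ) : Fin (m + 1)) else C c)

/-- The chain `ĝ_1 = g_1(p, y)`, `ĝ_{k+1} = g_{k+1}(ĝ_k(y), y)` of univariate polynomials
(0-based indexing: `ghat g p k = ĝ_{k+1}`). -/
noncomputable def ghat {K : Type*} [Field K] (g : ℕ → MvPolynomial (Fin 2) K)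
    (p : K) : ℕ → Polynomial K
  | 0 => aeval ![Polynomial.C p, Polynomial.X] (g 0)
  | (k + 1) => aeval ![ghat g p k, Polynomial.X] (g (k + 1))

/-- Embed a univariate polynomial into `K[x_1, …, x_m, y]` via the variable `y`. -/
noncomputable def yPoly {K : Type*} [Field K] (m : ℕ) (q : Polynomial K) :
    MvPolynomial (Fin (m + 1)) K :=
  Polynomial.aeval (X ((m : ℕ) : Fin (m + 1))) q

/-- The (monic, up to a unit) greatest common divisor of two univariate polynomials over a
field. -/
noncomputable def polyGCD {K : Type*} [Field K] (f g : Polynomial K) : Polynomial K :=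
  @EuclideanDomain.gcd _ _ (Classical.decEq _) f g

/-- The number of distinct roots of a univariate polynomial in the base field. -/
noncomputable def numRoots {K : Type*} [Field K] (f : Polynomial K) : ℕ :=
  letI := Classical.decEq K
  f.roots.toFinset.card

/-! ### Feistel-2n/n keyed iterated polynomial systems -/

/-- The nonlinear ("left branch") polynomials of the keyed iterated polynomial system for
Feistel-`2n/n` (with `n = m + 1`, indexed here by `k = 0, …, m`).  The ambient ring is
`K[x_{L,1}, x_{R,1}, …, x_{L,m}, x_{R,m}, y]` where `x_{L,j}` has variable index `2(j-1)`,
`x_{R,j}` has variable index `2(j-1) + 1` and `y` has variable index `2m`. -/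
noncomputable def fstL {K : Type*} [Field K] (m : ℕ) (g : ℕ → MvPolynomial (Fin 2) K)
    (pL pR cL : K) (k : ℕ) : MvPolynomial (Fin (2 * m + 1)) K :=
  (if k = 0 then C pR else X (((2 * (k - 1) + 1 : ℕ)) : Fin (2 * m + 1)))
  + aeval ![if k = 0 then C pL else X (((2 * (k - 1) : ℕ)) : Fin (2 * m + 1)),
            X (((2 * m : ℕ)) : Fin (2 * m + 1))] (g k)
  - (if k < m then X (((2 * k : ℕ)) : Fin (2 * m + 1)) else C cL)

/-- The linear ("right branch") polynomials of the keyed iterated polynomial system for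
Feistel-`2n/n` (same variable conventions as in `fstL`). -/
noncomputable def fstR {K : Type*} [Field K] (m : ℕ) (pL cR : K) (k : ℕ) :
    MvPolynomial (Fin (2 * m + 1)) K :=
  (if k = 0 then C pL else X (((2 * (k - 1) : ℕ)) : Fin (2 * m + 1)))
  - (if k < m then X (((2 * k + 1 : ℕ)) : Fin (2 * m + 1)) else C cR)

/-- The downsized Feistel system `H = {f̃_1, …, f̃_n}` (with `n = m + 1`, indexed here by
`k = 0, …, m`), obtained by substituting the linear polynomials into the nonlinear ones.  The
ambient ring is `K[x_{R,2}, …, x_{R,m}, x_{L,m}, y]` where `x_{R,j}` has variable index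
`j - 2`, `x_{L,m}` has variable index `m - 1` and `y` has variable index `m`. -/
noncomputable def hTil {K : Type*} [Field K] (m : ℕ) (g : ℕ → MvPolynomial (Fin 2) K)
    (pL pR cL : K) (k : ℕ) : MvPolynomial (Fin (m + 1)) K :=
  (if k = 0 then C pR else if k = 1 then C pL else X (((k - 2 : ℕ)) : Fin (m + 1)))
  + aeval ![if k = 0 then C pL else X (((k - 1 : ℕ)) : Fin (m + 1)),
            X ((m : ℕ) : Fin (m + 1))] (g k)
  - (if k < m then X ((k : ℕ) : Fin (m + 1)) else C cL)

/-- The chain `ĥ_1 = p_R + g_1(p_L, y)`, `ĥ_2 = p_L + g_2(ĥ_1, y)`,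
`ĥ_i = ĥ_{i-2} + g_i(ĥ_{i-1}, y)` of univariate polynomials (0-based indexing:
`hHat g pL pR k = ĥ_{k+1}`). -/
noncomputable def hHat {K : Type*} [Field K] (g : ℕ → MvPolynomial (Fin 2) K)
    (pL pR : K) : ℕ → Polynomial K
  | 0 => Polynomial.C pR + aeval ![Polynomial.C pL, Polynomial.X] (g 0)
  | 1 => Polynomial.C pL + aeval ![hHat g pL pR 0, Polynomial.X] (g 1)
  | (k + 2) => hHat g pL pR k + aeval ![hHat g pL pR (k + 1), Polynomial.X] (g (k + 2))

/-! ### Two plain/ciphertext systems -/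

/-- A univariate keyed iterated polynomial system placed inside the ring
`K[u_1, …, u_m, v_1, …, v_m, y]` (`u_j` has index `j - 1`, `v_j` has index `m + j - 1`, `y` has
index `2m`), with the state variables offset by `off` (so `off = 0` uses the `u`-variables and
`off = m` the `v`-variables). -/
noncomputable def twoF {K : Type*} [Field K] (m : ℕ) (g : ℕ → MvPolynomial (Fin 2) K)
    (p c : K) (off : ℕ) (k : ℕ) : MvPolynomial (Fin (2 * m + 1)) K :=
  aeval ![if k = 0 then C p else X (((off + (k - 1) : ℕ)) : Fin (2 * m + 1)),
          X (((2 * m : ℕ)) : Fin (2 * m + 1))] (g k)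
  - (if k < m then X (((off + k : ℕ)) : Fin (2 * m + 1)) else C c)

/-! ### Macaulay spaces, degree falls, last fall degree, satiety, degree of regularity -/

/-- The row space `W_{F,d}` of the degree-`d` inhomogeneous Macaulay matrix of the system `F`:
all polynomials of the form `∑ gᵢ·fᵢ` with `deg (gᵢ·fᵢ) ≤ d` for every `i`. -/
def Wsp {σ K ι : Type*} [CommSemiring K] [Fintype ι]
    (F : ι → MvPolynomial σ K) (d : ℕ) : Set (MvPolynomial σ K) :=
  {f | ∃ g : ι → MvPolynomial σ K, f = ∑ i, g i * F i ∧ ∀ i, (g i * F i).totalDegree ≤ d}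

/-- `d_f`: the least degree `d` with `f ∈ W_{F,d}`. -/
noncomputable def dfall {σ K ι : Type*} [CommSemiring K] [Fintype ι]
    (F : ι → MvPolynomial σ K) (f : MvPolynomial σ K) : ℕ :=
  sInf {d : ℕ | f ∈ Wsp F d}

/-- The last fall degree `d_F ∈ ℕ ∪ {∞}`: the least `d` such that every `f` in the ideal
generated by `F` lies in `W_{F, max (d, deg f)}` (the value `∞` imposes no condition since
`W_{F,∞} = (F)`). -/
noncomputable def lastFall {σ K ι : Type*} [CommSemiring K] [Fintype ι]
    (F : ι → MvPolynomial σ K) : ℕ∞ :=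
  sInf {d : ℕ∞ | ∀ e : ℕ, d = (e : ℕ∞) →
    ∀ f ∈ Ideal.span (Set.range F), f ∈ Wsp F (max e f.totalDegree)}

/-- The satiety of a homogeneous ideal: the least `s` such that `I` and `I^sat` agree in all
degrees `l ≥ s`. -/
noncomputable def satiety {σ K : Type*} [Field K] (I : Ideal (MvPolynomial σ K)) : ℕ :=
  sInf {s : ℕ | ∀ l, s ≤ l → ∀ f : MvPolynomial σ K, f.IsHomogeneous l →
    (f ∈ I ↔ f ∈ maxSat I)}

/-- The degree of regularity `d_reg(F) ∈ ℕ ∪ {∞}` of a polynomial system: the least `d` such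
that every homogeneous polynomial of degree `d` lies in the ideal generated by the highest
degree components `F^top`. -/
noncomputable def dregSys {σ K : Type*} [CommSemiring K] (F : Set (MvPolynomial σ K)) : ℕ∞ :=
  sInf {e : ℕ∞ | ∃ d : ℕ, e = (d : ℕ∞) ∧ ∀ f : MvPolynomial σ K, f.IsHomogeneous d →
    f ∈ Ideal.span (topComp '' F)}

theorem Ideal.eq_comap_of_sub_mem {A B F G : Type*} [CommRing A] [CommRing B]
    [FunLike F A B] [RingHomClass F A B] [FunLike G B A] [RingHomClass G B A]
    (ψ : F) (s : G) {J : Ideal A} {I : Ideal B} (hJ : J ≤ I.comap ψ) (hI : I.map s ≤ J)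
    (hs : ∀ a, a - s (ψ a) ∈ J) : J = I.comap ψ := by
  refine le_antisymm hJ fun a ha => ?_
  rw [← sub_add_cancel a (s (ψ a))]
  exact J.add_mem (hs a) (hI (Ideal.mem_map_of_mem s ha))

theorem MvPolynomial.aeval_sub_aeval_mem {R A σ : Type*} [CommSemiring R] [CommRing A]
    [Algebra R A] {I : Ideal A} {v w : σ → A} (h : ∀ i, v i - w i ∈ I)
    (f : MvPolynomial σ R) : aeval v f - aeval w f ∈ I := by
  rw [← Ideal.Quotient.eq, ← Ideal.Quotient.mkₐ_eq_mk R, ← AlgHom.comp_apply,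
    ← AlgHom.comp_apply, comp_aeval, comp_aeval]
  congr 2
  funext i
  exact Ideal.Quotient.eq.mpr (h i)

theorem Polynomial.X_pow_card_sub_X_dvd_pow_card_sub {K : Type*} [Field K] [Fintype K]
    (h : Polynomial K) :
    Polynomial.X ^ Fintype.card K - Polynomial.X ∣ h ^ Fintype.card K - h := by
  have := sub_dvd_eval_sub (Polynomial.X ^ Fintype.card K) Polynomial.X (h.map Polynomial.C)
  rwa [Polynomial.eval_map, Polynomial.eval_map, ← Polynomial.comp, ← Polynomial.comp,
    Polynomial.comp_X, ← Polynomial.expand_eq_comp_X_pow, FiniteField.expand_card] at this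

theorem span_polyGCD {K : Type*} [Field K] (f g : Polynomial K) :
    Ideal.span {polyGCD f g} = Ideal.span {f, g} :=
  @EuclideanDomain.span_gcd _ _ (Classical.decEq _) f g

theorem polyGCD_dvd_right {K : Type*} [Field K] (f g : Polynomial K) : polyGCD f g ∣ g :=
  @EuclideanDomain.gcd_dvd_right _ _ (Classical.decEq _) f g

theorem squarefree_polyGCD_X_pow_card_sub_X {K : Type*} [Field K] [Fintype K]
    (f : Polynomial K) :
    Squarefree (polyGCD f (Polynomial.X ^ Fintype.card K - Polynomial.X)) := by
  have hsep : (Polynomial.X ^ Fintype.card K - Polynomial.X : Polynomial K).Separable :=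
    galois_poly_separable (ringChar K) _ (ringChar.dvd (FiniteField.cast_card_eq_zero K))
  exact hsep.squarefree.squarefree_of_dvd (polyGCD_dvd_right _ _)

section KeyedSystem

variable {K : Type*} [Field K] (m : ℕ) (g : ℕ → MvPolynomial (Fin 2) K) (p : K)

/-- Evaluation at `(ĝ_1(y), …, ĝ_{n-1}(y), y)`, the generic solution of the first `n - 1`
equations of the system. -/
noncomputable def ghatEval : MvPolynomial (Fin (m + 1)) K →ₐ[K] Polynomial K :=
  aeval fun j => if (j : ℕ) < m then ghat g p j else Polynomial.X

variable {m g p}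

theorem ghatEval_X_of_lt {k : ℕ} (hk : k < m) :
    ghatEval m g p (X (k : Fin (m + 1))) = ghat g p k := by
  simp [ghatEval, Nat.mod_eq_of_lt (Nat.lt_succ_of_lt hk), hk]

theorem ghatEval_X_last : ghatEval m g p (X (m : Fin (m + 1))) = Polynomial.X := by
  simp [ghatEval]

theorem ghatEval_yPoly (h : Polynomial K) : ghatEval m g p (yPoly m h) = h := by
  rw [yPoly, ← Polynomial.aeval_algHom_apply, ghatEval_X_last, Polynomial.aeval_X_left_apply]

theorem ghat_eq_aeval (k : ℕ) :
    ghat g p k = aeval ![if k = 0 then Polynomial.C p else ghat g p (k - 1), Polynomial.X]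
      (g k) := by
  cases k <;> rfl

theorem ghatEval_keyedF (c : K) {k : ℕ} (hk : k ≤ m) :
    ghatEval m g p (keyedF m g p c k)
      = ghat g p k - if k < m then ghat g p k else Polynomial.C c := by
  have hstep : ghatEval m g p
      (aeval ![if k = 0 then C p else X ((k - 1 : ℕ) : Fin (m + 1)), X (m : Fin (m + 1))] (g k))
        = ghat g p k := by
    rw [← AlgHom.comp_apply, comp_aeval, ghat_eq_aeval k]
    congr 2
    funext i
    fin_cases i
    · by_cases hk0 : k = 0
      · simp [hk0]
      · simp [hk0, ghatEval_X_of_lt (show k - 1 < m by omega)]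
    · simp [ghatEval]
  rw [keyedF, map_sub, hstep]
  split_ifs with hkm
  · rw [ghatEval_X_of_lt hkm]
  · rw [ghatEval, aeval_C, Polynomial.algebraMap_eq]

theorem yPoly_ghatEval_aeval {σ : Type*} (v : σ → MvPolynomial (Fin (m + 1)) K)
    (G : MvPolynomial σ K) :
    yPoly m (ghatEval m g p (aeval v G)) = aeval (fun i => yPoly m (ghatEval m g p (v i))) G := by
  rw [yPoly, ← AlgHom.comp_apply, ← AlgHom.comp_apply, comp_aeval]
  rfl

theorem sub_yPoly_ghatEval_mem {I : Ideal (MvPolynomial (Fin (m + 1)) K)}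
    (hI : ∀ k < m, X (k : Fin (m + 1)) - yPoly m (ghat g p k) ∈ I)
    (f : MvPolynomial (Fin (m + 1)) K) : f - yPoly m (ghatEval m g p f) ∈ I := by
  have hf : yPoly m (ghatEval m g p f) = aeval (fun i => yPoly m (ghatEval m g p (X i))) f := by
    simpa using yPoly_ghatEval_aeval (g := g) (p := p) X f
  nth_rewrite 1 [← aeval_X_left_apply f]
  rw [hf]
  refine aeval_sub_aeval_mem (fun i => ?_) f
  by_cases hi : (i : ℕ) < m
  · rw [← Fin.cast_val_eq_self i, ghatEval_X_of_lt hi]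
    exact hI i hi
  · obtain rfl : i = (m : Fin (m + 1)) := Fin.ext (by simp; omega)
    rw [ghatEval_X_last, yPoly, Polynomial.aeval_X, sub_self]
    exact zero_mem I

theorem X_sub_yPoly_ghat_mem_span_keyedF (c : K) {k : ℕ} (hk : k < m) :
    X (k : Fin (m + 1)) - yPoly m (ghat g p k) ∈ Ideal.span (keyedF m g p c '' Set.Iic m) := by
  set S := Ideal.span (keyedF m g p c '' Set.Iic m)
  induction k using Nat.strong_induction_on with
  | _ k ih =>
  set A : MvPolynomial (Fin (m + 1)) K :=
    aeval ![if k = 0 then C p else X ((k - 1 : ℕ) : Fin (m + 1)), X (m : Fin (m + 1))] (g k)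
  have hA : A - yPoly m (ghatEval m g p A) ∈ S := by
    rw [yPoly_ghatEval_aeval]
    refine aeval_sub_aeval_mem (fun i => ?_) (g k)
    fin_cases i
    · by_cases hk0 : k = 0
      · simp [hk0, ghatEval, yPoly]
      · simpa [hk0, ghatEval_X_of_lt (show k - 1 < m by omega)]
          using ih (k - 1) (by omega) (by omega)
    · simp [ghatEval, yPoly]
  have hF : keyedF m g p c k ∈ S := Ideal.subset_span ⟨k, Set.mem_Iic.mpr hk.le, rfl⟩
  have hFA : keyedF m g p c k = A - X (k : Fin (m + 1)) := by rw [keyedF, if_pos hk]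
  have hAX : ghatEval m g p A = ghat g p k := by
    have := ghatEval_keyedF c hk.le (g := g) (p := p)
    rwa [if_pos hk, sub_self, hFA, map_sub, sub_eq_zero, ghatEval_X_of_lt hk] at this
  have hsplit : X (k : Fin (m + 1)) - yPoly m (ghat g p k)
      = (A - yPoly m (ghatEval m g p A)) - keyedF m g p c k := by
    rw [hAX, hFA]; ring
  rw [hsplit]
  exact S.sub_mem hA hF

theorem span_keyedF_add_eq_comap (c : K) (r : Polynomial K) :
    Ideal.span (keyedF m g p c '' Set.Iic m) + Ideal.span {yPoly m r}
      = (Ideal.span {ghat g p m - Polynomial.C c, r}).comap (ghatEval m g p) := by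
  set S := Ideal.span (keyedF m g p c '' Set.Iic m)
  have hS : ∀ f, f - yPoly m (ghatEval m g p f) ∈ S :=
    sub_yPoly_ghatEval_mem fun k hk => X_sub_yPoly_ghat_mem_span_keyedF c hk
  refine Ideal.eq_comap_of_sub_mem (ghatEval m g p)
    (Polynomial.aeval (X (m : Fin (m + 1)) : MvPolynomial (Fin (m + 1)) K)) ?_ ?_
    (fun f => Ideal.mem_sup_left (hS f))
  · rw [Submodule.add_eq_sup, sup_le_iff, Ideal.span_le, Ideal.span_le]
    constructor
    · rintro _ ⟨k, hk, rfl⟩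
      rw [SetLike.mem_coe, Ideal.mem_comap, ghatEval_keyedF c hk]
      split_ifs with hkm
      · rw [sub_self]
        exact zero_mem _
      · obtain rfl : k = m := le_antisymm hk (not_lt.mp hkm)
        exact Ideal.subset_span (Set.mem_insert _ _)
    · rintro _ rfl
      rw [SetLike.mem_coe, Ideal.mem_comap, ghatEval_yPoly]
      exact Ideal.subset_span (Set.mem_insert_of_mem _ rfl)
  · rw [Ideal.map_span, Ideal.span_le]
    rintro _ ⟨u, hu | rfl, rfl⟩
    · subst hu
      have hF : keyedF m g p c m ∈ S := Ideal.subset_span ⟨m, Set.mem_Iic.mpr le_rfl, rfl⟩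
      have := S.sub_mem hF (hS (keyedF m g p c m))
      rw [sub_sub_cancel, ghatEval_keyedF c le_rfl, if_neg (lt_irrefl m)] at this
      exact Ideal.mem_sup_left this
    · exact Ideal.mem_sup_right (Ideal.subset_span rfl)

theorem span_X_sub_ghat_insert_yPoly_eq_comap (d : Polynomial K) :
    Ideal.span ((fun k => if k < m then X ((k : ℕ) : Fin (m + 1)) - yPoly m (ghat g p k)
        else yPoly m d) '' Set.Iic m)
      = (Ideal.span {d}).comap (ghatEval m g p) := by
  set J := Ideal.span ((fun k => if k < m then X ((k : ℕ) : Fin (m + 1)) - yPoly m (ghat g p k)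
        else yPoly m d) '' Set.Iic m)
  have hX_sub_ghat : ∀ k < m, X (k : Fin (m + 1)) - yPoly m (ghat g p k) ∈ J := fun k hk =>
    Ideal.subset_span ⟨k, Set.mem_Iic.mpr hk.le, if_pos hk⟩
  refine Ideal.eq_comap_of_sub_mem (ghatEval m g p)
    (Polynomial.aeval (X (m : Fin (m + 1)) : MvPolynomial (Fin (m + 1)) K)) ?_ ?_
    (sub_yPoly_ghatEval_mem hX_sub_ghat)
  · rw [Ideal.span_le]
    rintro _ ⟨k, -, rfl⟩
    rw [SetLike.mem_coe, Ideal.mem_comap]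
    dsimp only
    split_ifs with hkm
    · rw [map_sub, ghatEval_X_of_lt hkm, ghatEval_yPoly, sub_self]
      exact zero_mem _
    · rw [ghatEval_yPoly]
      exact Ideal.mem_span_singleton_self d
  · rw [Ideal.map_span, Set.image_singleton, Ideal.span_le, Set.singleton_subset_iff]
    exact Ideal.subset_span ⟨m, Set.mem_Iic.mpr le_rfl, if_neg (lt_irrefl m)⟩

theorem pow_card_sub_self_mem_comap_ghatEval [Fintype K] {I : Ideal (Polynomial K)}
    (hI : Polynomial.X ^ Fintype.card K - Polynomial.X ∈ I) (f : MvPolynomial (Fin (m + 1)) K) :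
    f ^ Fintype.card K - f ∈ I.comap (ghatEval m g p) := by
  rw [Ideal.mem_comap, map_sub, map_pow]
  exact I.mem_of_dvd (Polynomial.X_pow_card_sub_X_dvd_pow_card_sub _) hI

end KeyedSystem

theorem stmt_7_general {K : Type*} [Field K] [Fintype K] (m : ℕ)
    (g : ℕ → MvPolynomial (Fin 2) K) (p c : K) :
    (Ideal.span ((keyedF m g p c) '' Set.Iic m)
        + Ideal.span {X ((m : ℕ) : Fin (m + 1)) ^ Fintype.card K
            - (X ((m : ℕ) : Fin (m + 1)) : MvPolynomial (Fin (m + 1)) K)}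
      = Ideal.span ((fun k => if k < m then X ((k : ℕ) : Fin (m + 1)) - yPoly m (ghat g p k)
          else yPoly m (polyGCD (ghat g p m - Polynomial.C c)
            (Polynomial.X ^ Fintype.card K - Polynomial.X))) '' Set.Iic m))
    ∧ (Ideal.span ((keyedF m g p c) '' Set.Iic m)
        + Ideal.span {X ((m : ℕ) : Fin (m + 1)) ^ Fintype.card K
            - (X ((m : ℕ) : Fin (m + 1)) : MvPolynomial (Fin (m + 1)) K)}).IsRadical
    ∧ Ideal.span ((keyedF m g p c) '' Set.Iic m)
        + Ideal.span {X ((m : ℕ) : Fin (m + 1)) ^ Fintype.card K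
            - (X ((m : ℕ) : Fin (m + 1)) : MvPolynomial (Fin (m + 1)) K)}
      = Ideal.span ((keyedF m g p c) '' Set.Iic m)
        + Ideal.span (Set.range fun j : Fin (m + 1) =>
            X j ^ Fintype.card K - (X j : MvPolynomial (Fin (m + 1)) K)) := by
  set d := polyGCD (ghat g p m - Polynomial.C c) (Polynomial.X ^ Fintype.card K - Polynomial.X)
  have hfield : (X (m : Fin (m + 1)) : MvPolynomial (Fin (m + 1)) K) ^ Fintype.card K
      - X (m : Fin (m + 1)) = yPoly m (Polynomial.X ^ Fintype.card K - Polynomial.X) := by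
    simp [yPoly]
  have hI : Ideal.span (keyedF m g p c '' Set.Iic m)
        + Ideal.span {(X (m : Fin (m + 1)) : MvPolynomial (Fin (m + 1)) K) ^ Fintype.card K
            - X (m : Fin (m + 1))}
      = (Ideal.span {d}).comap (ghatEval m g p) := by
    rw [hfield, span_keyedF_add_eq_comap, span_polyGCD]
  refine ⟨hI.trans (span_X_sub_ghat_insert_yPoly_eq_comap d).symm, ?_, ?_⟩
  · rw [hI]
    exact (isRadical_iff_span_singleton.mp
      (squarefree_polyGCD_X_pow_card_sub_X _).isRadical).comap _
  · refine le_antisymm (sup_le_sup_left (Ideal.span_mono ?_) _) (sup_le le_sup_left ?_)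
    · exact Set.singleton_subset_iff.mpr ⟨m, rfl⟩
    · rw [hI, Ideal.span_le]
      rintro _ ⟨j, rfl⟩
      exact pow_card_sub_self_mem_comap_ghatEval
        (Ideal.mem_span_singleton.mpr (polyGCD_dvd_right _ _)) (X j)

/-- (`n = m + 1 ≥ 2`, `q = |K|`.) Adding the field equation `y^q - y` to a
univariate keyed iterated polynomial system yields the ideal generated by
`x_1 - ĝ_1, …, x_{n-1} - ĝ_{n-1}, gcd(ĝ_n, y^q - y)`; this ideal is radical and coincides with
the ideal obtained by adding all field equations. -/
theorem stmt_7 {K : Type*} [Field K] [Fintype K] (m : ℕ) (hm : 1 ≤ m)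
    (g : ℕ → MvPolynomial (Fin 2) K) (p c : K)
    (hgnc : ∀ k ≤ m, 0 < (g k).totalDegree)
    (hzero : ∃ z : Fin (m + 1) → K, ∀ k ≤ m, eval z (keyedF m g p c k) = 0) :
    (Ideal.span ((keyedF m g p c) '' Set.Iic m)
        + Ideal.span {X ((m : ℕ) : Fin (m + 1)) ^ Fintype.card K
            - (X ((m : ℕ) : Fin (m + 1)) : MvPolynomial (Fin (m + 1)) K)}
      = Ideal.span ((fun k => if k < m then X ((k : ℕ) : Fin (m + 1)) - yPoly m (ghat g p k)
          else yPoly m (polyGCD (ghat g p m - Polynomial.C c)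
            (Polynomial.X ^ Fintype.card K - Polynomial.X))) '' Set.Iic m))
    ∧ (Ideal.span ((keyedF m g p c) '' Set.Iic m)
        + Ideal.span {X ((m : ℕ) : Fin (m + 1)) ^ Fintype.card K
            - (X ((m : ℕ) : Fin (m + 1)) : MvPolynomial (Fin (m + 1)) K)}).IsRadical
    ∧ Ideal.span ((keyedF m g p c) '' Set.Iic m)
        + Ideal.span {X ((m : ℕ) : Fin (m + 1)) ^ Fintype.card K
            - (X ((m : ℕ) : Fin (m + 1)) : MvPolynomial (Fin (m + 1)) K)}
      = Ideal.span ((keyedF m g p c) '' Set.Iic m)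
        + Ideal.span (Set.range fun j : Fin (m + 1) =>
            X j ^ Fintype.card K - (X j : MvPolynomial (Fin (m + 1)) K)) :=
  stmt_7_general m g p c
end

section
/- Let K be a field, let n ≥ 2, and let I = (f_1,…,f_n) ⊆ P = K[x_1,…,x_{n−1},y] be generated by a univariate keyed iterated polynomial system with d_i := deg f_i ≥ 2 for all i and with the monomial x_{i−1}^{d_i} occurring in f_i for 2 ≤ i ≤ n. Let ĝ_1 = g_1(p,y) and ĝ_i = g_i(ĝ_{i−1}(y), y) for 2 ≤ i ≤ n−1, and for a monomial t = y^{a_0}·x_1^{a_1}⋯x_{n−1}^{a_{n−1}} with a_0 < d_1 and a_j < d_{j+1} for all 1 ≤ j ≤ n−1, set t̂ = y^{a_0}·ĝ_1(y)^{a_1}⋯ĝ_{n−1}(y)^{a_{n−1}} ∈ K[y]. Then: (a) for s_i = ∏_{j=i}^{n−1} x_j^{d_{j+1}−1} with 1 ≤ i ≤ n−1, one has deg ŝ_i = ∏_{k=1}^{n} d_k − ∏_{k=1}^{i} d_k; (b) for every monomial t as above with deg t ≤ deg s_i, one has deg t̂ ≤ deg ŝ_i, and this inequality is strict whenever t ≠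 s_i. -/
open MvPolynomial
open Fin.NatCast

/-- The substitution `t ↦ t̂` of a monomial (exponent vector) of `K[x_1, …, x_m, y]` into a
univariate polynomial in `y`: `y ↦ y` and `x_j ↦ ĝ_j`. -/
noncomputable def substY {K : Type*} [Field K] (m : ℕ) (g : ℕ → MvPolynomial (Fin 2) K)
    (p : K) (a : Fin (m + 1) →₀ ℕ) : Polynomial K :=
  Polynomial.X ^ (a ((m : ℕ) : Fin (m + 1)))
    * ∏ j ∈ Finset.range m, (ghat g p j) ^ (a ((j : ℕ) : Fin (m + 1)))

/-- The exponent vector of the monomial `s_{i+1} = ∏_{j=i+1}^{m} x_j^{d_{j+1} - 1}`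
(0-based index `i`, so `sMono m g p c i` corresponds to the paper's `s_{i+1}`). -/
noncomputable def sMono {K : Type*} [Field K] (m : ℕ) (g : ℕ → MvPolynomial (Fin 2) K)
    (p c : K) (i : ℕ) : Fin (m + 1) →₀ ℕ :=
  ∑ v ∈ Finset.Ico i m, Finsupp.single ((v : ℕ) : Fin (m + 1))
    ((keyedF m g p c (v + 1)).totalDegree - 1)


/-! The degrees `D_j = deg ĝ_j = d_1 ⋯ d_j` multiply along the chain, because the monomial
`x^{d_{j+1}}` dominates `g_{j+1}(ĝ_j, y)`. Hence `deg t̂ = a_0 + a_1 D_1 + ⋯ + a_{n-1} D_{n-1}` is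
the value of the exponent vector of `t` read as a mixed-radix number with digits `a_0 < d_1` and
`a_j < d_{j+1}`. The monomial `s_i` carries the maximal digits from position `i` on and zeros
below, so (a) is a telescoping sum. For (b), compare a digit string `t` with `s_i` from the top:
a smaller digit at the top position where they differ cannot be made up by the lower digits, and
a larger one can only occur below position `i`, where `s_i` has zeros, which would make the
digit sum of `t` exceed that of `s_i`. -/

open Finset

section MixedRadix

variable (d : ℕ → ℕ)

def mixedRadixValue (b : ℕ → ℕ) (n : ℕ) : ℕ :=
  ∑ k ∈ range n, b k * ∏ l ∈ range k, d l

def topDigits (i k : ℕ) : ℕ :=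
  if i ≤ k then d k - 1 else 0

variable {d}

theorem mixedRadixValue_succ (b : ℕ → ℕ) (n : ℕ) :
    mixedRadixValue d b (n + 1) = mixedRadixValue d b n + b n * ∏ l ∈ range n, d l :=
  sum_range_succ _ _

theorem mixedRadixValue_congr {b b' : ℕ → ℕ} {n : ℕ} (h : ∀ k < n, b k = b' k) :
    mixedRadixValue d b n = mixedRadixValue d b' n :=
  sum_congr rfl fun k hk => by rw [h k (mem_range.mp hk)]

theorem mixedRadixValue_lt_prod {b : ℕ → ℕ} {n : ℕ} (hb : ∀ k < n, b k < d k) :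
    mixedRadixValue d b n < ∏ l ∈ range n, d l := by
  induction n with
  | zero => simp [mixedRadixValue]
  | succ n ih =>
    have hlow := ih fun k hk => hb k (by omega)
    have hdigit : b n + 1 ≤ d n := hb n (by omega)
    calc mixedRadixValue d b (n + 1)
        < (b n + 1) * ∏ l ∈ range n, d l := by rw [mixedRadixValue_succ]; linarith
      _ ≤ ∏ l ∈ range (n + 1), d l := by
        rw [prod_range_succ, mul_comm]; exact Nat.mul_le_mul_left _ hdigit

theorem mixedRadixValue_topDigits_add {i n : ℕ} (hd : ∀ k < n, 0 < d k) (hi : i ≤ n) :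
    mixedRadixValue d (topDigits d i) n + ∏ l ∈ range i, d l = ∏ l ∈ range n, d l := by
  induction n, hi using Nat.le_induction with
  | base =>
    rw [mixedRadixValue, sum_eq_zero fun k hk => ?_, zero_add]
    rw [topDigits, if_neg (by simpa using hk), zero_mul]
  | succ n hin ih =>
    have hdn : 1 ≤ d n := hd n (by omega)
    rw [mixedRadixValue_succ, topDigits, if_pos hin, prod_range_succ,
      ← ih fun k hk => hd k (by omega)]
    obtain ⟨e, he⟩ : ∃ e, d n = e + 1 := ⟨d n - 1, by omega⟩
    rw [he, Nat.add_sub_cancel]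
    ring

theorem mixedRadixValue_lt_topDigits {b : ℕ → ℕ} {i n : ℕ} (hi : i ≤ n)
    (hb : ∀ k < n, b k < d k)
    (hsum : ∑ k ∈ range n, b k ≤ ∑ k ∈ range n, topDigits d i k) :
    (∀ k < n, b k = topDigits d i k) ∨
      mixedRadixValue d b n < mixedRadixValue d (topDigits d i) n := by
  induction n, hi using Nat.le_induction with
  | base =>
    have htop : ∑ k ∈ range i, topDigits d i k = 0 :=
      sum_eq_zero fun k hk => if_neg (by simpa using hk)
    rw [htop, Nat.le_zero, sum_eq_zero_iff] at hsum
    exact .inl fun k hk => by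
      rw [hsum k (mem_range.mpr hk), topDigits, if_neg (by omega)]
  | succ n hin ih =>
    have htop : topDigits d i n = d n - 1 := if_pos hin
    have hbn : b n < d n := hb n (by omega)
    rcases Nat.lt_or_ge (b n) (d n - 1) with hlt | hge
    · -- a smaller top digit cannot be compensated by the lower digits
      right
      have hlow := mixedRadixValue_lt_prod fun k (hk : k < n) => hb k (by omega)
      rw [mixedRadixValue_succ, mixedRadixValue_succ, htop]
      nlinarith
    · have hbn' : b n = topDigits d i n := by omega
      rw [sum_range_succ, sum_range_succ, hbn'] at hsum
      rcases ih (fun k hk => hb k (by omega)) (by omega) with heq | hlt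
      · left
        intro k hk
        rcases Nat.lt_or_ge k n with hkn | hkn
        · exact heq k hkn
        · rwa [show k = n by omega]
      · right
        rw [mixedRadixValue_succ, mixedRadixValue_succ, hbn']
        omega

end MixedRadix

section PolynomialDegrees

variable {R σ : Type*}

theorem Polynomial.toMvPolynomial_eq_sum [CommSemiring R] (i : σ) (q : Polynomial R) :
    q.toMvPolynomial i
      = ∑ n ∈ q.support, MvPolynomial.monomial (Finsupp.single i n) (q.coeff n) := by
  conv_lhs => rw [q.as_sum_support]
  simp [Polynomial.toMvPolynomial, MvPolynomial.X_pow_eq_monomial, MvPolynomial.C_mul_monomial]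

theorem Polynomial.coeff_toMvPolynomial_single [CommSemiring R] (i : σ) (q : Polynomial R)
    (n : ℕ) : (q.toMvPolynomial i).coeff (Finsupp.single i n) = q.coeff n := by
  classical
  rw [q.toMvPolynomial_eq_sum, MvPolynomial.coeff_sum]
  simp only [MvPolynomial.coeff_monomial, (Finsupp.single_injective i).eq_iff]
  rw [Finset.sum_ite_eq']
  split_ifs with h
  · rfl
  · exact (Polynomial.notMem_support_iff.mp h).symm

theorem Polynomial.totalDegree_toMvPolynomial [CommSemiring R] (i : σ) (q : Polynomial R) :
    (q.toMvPolynomial i).totalDegree = q.natDegree := by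
  refine le_antisymm ?_ ?_
  · rw [q.toMvPolynomial_eq_sum]
    refine (totalDegree_finsetSum _ _).trans (Finset.sup_le fun n hn => ?_)
    refine (totalDegree_monomial_le _ _).trans ?_
    rw [Finsupp.sum_single_index rfl]
    exact Polynomial.le_natDegree_of_mem_supp n hn
  · rcases eq_or_ne q 0 with rfl | hq
    · simp
    · have hlead : Finsupp.single i q.natDegree ∈ (q.toMvPolynomial i).support := by
        rw [MvPolynomial.mem_support_iff, q.coeff_toMvPolynomial_single]
        exact Polynomial.leadingCoeff_ne_zero.mpr hq
      simpa using le_totalDegree hlead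

theorem MvPolynomial.totalDegree_sub_eq_left_of_totalDegree_lt [CommRing R]
    {A B : MvPolynomial σ R} (h : B.totalDegree < (A - B).totalDegree) :
    (A - B).totalDegree = A.totalDegree := by
  conv_rhs => rw [← sub_add_cancel A B]
  exact (totalDegree_add_eq_left_of_totalDegree_lt h).symm

theorem MvPolynomial.totalDegree_rename_of_injective [CommSemiring R] {τ : Type*} {e : σ → τ}
    (he : Function.Injective e) (P : MvPolynomial σ R) :
    (rename e P).totalDegree = P.totalDegree := by
  rw [← weightedTotalDegree_one, weightedTotalDegree_rename_of_injective he,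
    ← weightedTotalDegree_one]
  rfl

/-- The monomials `x^a y^b ≠ x^d` of `G` (so `a < d`, `a + b ≤ d`) only reach degree
`a · deg q + b < d · deg q`. -/
theorem natDegree_aeval_vecCons_X [CommRing R] [IsDomain R] {G : MvPolynomial (Fin 2) R}
    {q : Polynomial R} (hG : G.coeff (Finsupp.single 0 G.totalDegree) ≠ 0)
    (hq : 2 ≤ q.natDegree) :
    (aeval ![q, Polynomial.X] G).natDegree = G.totalDegree * q.natDegree := by
  classical
  set d := G.totalDegree
  set D := q.natDegree
  have hq0 : q ≠ 0 := Polynomial.ne_zero_of_natDegree_gt (n := 0) (by omega)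
  have hrep : aeval ![q, Polynomial.X] G
      = ∑ a ∈ G.support, Polynomial.C (G.coeff a) * (q ^ a 0 * Polynomial.X ^ a 1) := by
    rw [aeval_def, eval₂_eq']
    simp [Fin.prod_univ_two, Polynomial.algebraMap_eq]
  have hdeg_mono : ∀ a ∈ G.support, a 0 + a 1 ≤ d := fun a ha => by
    simpa [Finsupp.sum_fintype, Fin.sum_univ_two] using le_totalDegree ha
  have hterm : ∀ a : Fin 2 →₀ ℕ,
      (Polynomial.C (G.coeff a) * (q ^ a 0 * Polynomial.X ^ a 1)).natDegree ≤ a 0 * D + a 1 :=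
    fun a => (Polynomial.natDegree_C_mul_le _ _).trans <| Polynomial.natDegree_mul_le.trans <|
      add_le_add Polynomial.natDegree_pow_le (Polynomial.natDegree_X_pow_le _)
  have hlt : ∀ a ∈ G.support, a ≠ Finsupp.single 0 d → a 0 * D + a 1 < d * D := by
    intro a ha hne
    have hsum := hdeg_mono a ha
    have ha0 : a 0 < d := by
      refine lt_of_le_of_ne (by omega) fun h0 => hne ?_
      ext j
      fin_cases j <;> simp [h0, show a 1 = 0 by omega]
    nlinarith
  refine Polynomial.natDegree_eq_of_le_of_coeff_ne_zero ?_ ?_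
  · rw [hrep]
    refine Polynomial.natDegree_sum_le_of_forall_le _ _ fun a ha => (hterm a).trans ?_
    nlinarith [hdeg_mono a ha]
  · rw [hrep, Polynomial.finsetSum_coeff, Finset.sum_eq_single_of_mem _ (mem_support_iff.mpr hG)
      fun a ha hne => Polynomial.coeff_eq_zero_of_natDegree_lt ((hterm a).trans_lt (hlt a ha hne))]
    simp only [Finsupp.single_eq_same, Finsupp.single_eq_of_ne (show (1 : Fin 2) ≠ 0 by decide),
      pow_zero, mul_one, Polynomial.coeff_C_mul]
    rw [← Polynomial.natDegree_pow, Polynomial.coeff_natDegree, Polynomial.leadingCoeff_pow]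
    exact mul_ne_zero hG (pow_ne_zero _ (Polynomial.leadingCoeff_ne_zero.mpr hq0))

end PolynomialDegrees

section KeyedSystem

variable {K : Type*} [Field K] {m : ℕ} {g : ℕ → MvPolynomial (Fin 2) K} {p c : K}

theorem Fin.natCast_inj_of_le {j l : ℕ} (hj : j ≤ m) (hl : l ≤ m) :
    ((j : Fin (m + 1)) = l) ↔ j = l := by
  rw [Fin.ext_iff, Fin.val_cast_of_lt (by omega), Fin.val_cast_of_lt (by omega)]

theorem totalDegree_keyedF_tail_le_one (k : ℕ) :
    (if k < m then X (k : Fin (m + 1)) else C c : MvPolynomial (Fin (m + 1)) K).totalDegree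
      ≤ 1 := by
  split_ifs <;> simp [totalDegree_X, totalDegree_C]

theorem keyedF_zero :
    keyedF m g p c 0
      = yPoly m (ghat g p 0) - (if 0 < m then X ((0 : ℕ) : Fin (m + 1)) else C c) := by
  rw [keyedF, yPoly, ghat, if_pos rfl, comp_aeval_apply]
  congr 3
  funext i
  fin_cases i <;> simp

theorem keyedF_of_pos {k : ℕ} (hk : 0 < k) :
    keyedF m g p c k = rename ![((k - 1 : ℕ) : Fin (m + 1)), (m : Fin (m + 1))] (g k)
      - (if k < m then X (k : Fin (m + 1)) else C c) := by
  rw [keyedF, if_neg (by omega), rename_eq_aeval]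
  congr 3
  funext i
  fin_cases i <;> rfl

theorem natDegree_ghat_zero (hd : 2 ≤ (keyedF m g p c 0).totalDegree) :
    (ghat g p 0).natDegree = (keyedF m g p c 0).totalDegree := by
  rw [keyedF_zero] at hd ⊢
  rw [totalDegree_sub_eq_left_of_totalDegree_lt
    ((totalDegree_keyedF_tail_le_one 0).trans_lt hd)]
  exact (Polynomial.totalDegree_toMvPolynomial _ _).symm

theorem injective_vecCons_pred_last {k : ℕ} (hk : 0 < k) (hkm : k ≤ m) :
    Function.Injective ![((k - 1 : ℕ) : Fin (m + 1)), (m : Fin (m + 1))] := by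
  have hne : ((k - 1 : ℕ) : Fin (m + 1)) ≠ m := by rw [Ne, Fin.natCast_inj_of_le] <;> omega
  intro a b hab
  fin_cases a <;> fin_cases b <;> simp_all [eq_comm]

theorem totalDegree_g_of_pos {k : ℕ} (hk : 0 < k) (hkm : k ≤ m)
    (hd : 2 ≤ (keyedF m g p c k).totalDegree) :
    (g k).totalDegree = (keyedF m g p c k).totalDegree := by
  rw [keyedF_of_pos hk] at hd ⊢
  rw [totalDegree_sub_eq_left_of_totalDegree_lt
      ((totalDegree_keyedF_tail_le_one k).trans_lt hd),
    totalDegree_rename_of_injective (injective_vecCons_pred_last hk hkm)]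

theorem coeff_keyedF_single_of_pos {k n : ℕ} (hk : 0 < k) (hkm : k ≤ m) (hn : 2 ≤ n) :
    (keyedF m g p c k).coeff (Finsupp.single ((k - 1 : ℕ) : Fin (m + 1)) n)
      = (g k).coeff (Finsupp.single 0 n) := by
  have htail : (if k < m then X (k : Fin (m + 1)) else C c : MvPolynomial (Fin (m + 1)) K).coeff
      (Finsupp.single ((k - 1 : ℕ) : Fin (m + 1)) n) = 0 :=
    coeff_eq_zero_of_totalDegree_lt <| (totalDegree_keyedF_tail_le_one k).trans_lt <| by
      rw [Finsupp.support_single _ (by omega), Finset.sum_singleton,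
        Finsupp.single_eq_same]
      omega
  rw [keyedF_of_pos hk, coeff_sub, htail, sub_zero,
    ← coeff_rename_mapDomain _ (injective_vecCons_pred_last hk hkm), Finsupp.mapDomain_single]
  rfl

end KeyedSystem

section Substitution

variable {K : Type*} [Field K] {m : ℕ} {g : ℕ → MvPolynomial (Fin 2) K} {p c : K}

theorem natDegree_ghat (hdeg : ∀ k ≤ m, 2 ≤ (keyedF m g p c k).totalDegree)
    (hmon : ∀ k, 1 ≤ k → k ≤ m →
      (keyedF m g p c k).coeff (Finsupp.single (((k - 1 : ℕ)) : Fin (m + 1))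
        ((keyedF m g p c k).totalDegree)) ≠ 0) :
    ∀ j < m, (ghat g p j).natDegree = ∏ l ∈ range (j + 1), (keyedF m g p c l).totalDegree := by
  intro j
  induction j with
  | zero =>
    intro hm
    rw [prod_range_one]
    exact natDegree_ghat_zero (hdeg 0 (by omega))
  | succ j ih =>
    intro hj
    have hdj := hdeg (j + 1) hj.le
    have htd := totalDegree_g_of_pos (Nat.succ_pos j) hj.le hdj
    have hG : (g (j + 1)).coeff (Finsupp.single 0 (g (j + 1)).totalDegree) ≠ 0 := by
      rw [htd, ← coeff_keyedF_single_of_pos (Nat.succ_pos j) hj.le hdj]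
      exact hmon (j + 1) (by omega) hj.le
    have hq : 2 ≤ (ghat g p j).natDegree := by
      have hpos : 0 < ∏ l ∈ range j, (keyedF m g p c (l + 1)).totalDegree :=
        prod_pos fun l hl => two_pos.trans_le (hdeg (l + 1) (by linarith [mem_range.mp hl]))
      rw [ih (by omega), prod_range_succ']
      nlinarith [hdeg 0 (by omega)]
    rw [ghat, natDegree_aeval_vecCons_X hG hq, htd, ih (by omega), prod_range_succ _ (j + 1),
      mul_comm]

/-- The exponents of `y, x_1, …, x_m` (variable indices `m, 0, …, m - 1`) as the digits
`0, 1, …, m`. -/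
def expDigits (a : Fin (m + 1) →₀ ℕ) : ℕ → ℕ
  | 0 => a m
  | j + 1 => a j

theorem sum_range_expDigits (a : Fin (m + 1) →₀ ℕ) :
    ∑ k ∈ range (m + 1), expDigits a k = expDeg a := by
  have hshift : ∑ k ∈ range (m + 1), expDigits a k = ∑ j ∈ range (m + 1), a j := by
    rw [sum_range_succ', sum_range_succ]
    rfl
  rw [hshift, ← Fin.sum_univ_eq_sum_range (fun j => a j), expDeg,
    Finsupp.sum_fintype _ _ fun _ => rfl]
  simp

theorem eq_of_expDigits_eq {a b : Fin (m + 1) →₀ ℕ}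
    (h : ∀ k < m + 1, expDigits a k = expDigits b k) : a = b := by
  ext i
  obtain ⟨j, hj, rfl⟩ : ∃ j ≤ m, (j : Fin (m + 1)) = i := ⟨i, by omega, Fin.cast_val_eq_self i⟩
  rcases hj.lt_or_eq with hj | rfl
  · exact h (j + 1) (by omega)
  · exact h 0 (by omega)

theorem sMono_apply {i j : ℕ} (hj : j ≤ m) :
    sMono m g p c i j
      = if i ≤ j ∧ j < m then (keyedF m g p c (j + 1)).totalDegree - 1 else 0 := by
  rw [sMono, Finsupp.finsetSum_apply]
  trans ∑ v ∈ Ico i m, if v = j then (keyedF m g p c (v + 1)).totalDegree - 1 else 0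
  · refine sum_congr rfl fun v hv => ?_
    rw [Finsupp.single_apply]
    exact if_congr (Fin.natCast_inj_of_le (mem_Ico.mp hv).2.le hj) rfl rfl
  · rw [sum_ite_eq']
    exact if_congr mem_Ico rfl rfl

theorem expDigits_sMono {i k : ℕ} (hk : k ≤ m) :
    expDigits (sMono m g p c i) k
      = topDigits (fun k => (keyedF m g p c k).totalDegree) (i + 1) k := by
  cases k with
  | zero =>
    rw [expDigits, sMono_apply le_rfl]
    simp [topDigits]
  | succ j =>
    rw [expDigits, sMono_apply (by omega), topDigits]
    simp [show j < m by omega]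

theorem natDegree_substY {d : ℕ → ℕ} (hd : ∀ k < m, 0 < d k)
    (hg : ∀ j < m, (ghat g p j).natDegree = ∏ l ∈ range (j + 1), d l) (a : Fin (m + 1) →₀ ℕ) :
    (substY m g p a).natDegree = mixedRadixValue d (expDigits a) (m + 1) := by
  have hne : ∀ j ∈ range m, ghat g p j ^ a j ≠ 0 := fun j hj => by
    have hj := mem_range.mp hj
    refine pow_ne_zero _ (Polynomial.ne_zero_of_natDegree_gt (n := 0) ?_)
    rw [hg j hj]
    exact prod_pos fun l hl => hd l (by linarith [mem_range.mp hl])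
  rw [substY, Polynomial.natDegree_mul (pow_ne_zero _ Polynomial.X_ne_zero)
      (prod_ne_zero_iff.mpr hne), Polynomial.natDegree_X_pow, Polynomial.natDegree_prod _ _ hne,
    mixedRadixValue, sum_range_succ', add_comm]
  congr 1
  · exact sum_congr rfl fun j hj => by
      rw [Polynomial.natDegree_pow, hg j (mem_range.mp hj)]
      rfl
  · simp [expDigits]

end Substitution

theorem stmt_10_general {K : Type*} [Field K] (m : ℕ)
    (g : ℕ → MvPolynomial (Fin 2) K) (p c : K)
    (hdeg : ∀ k ≤ m, 2 ≤ (keyedF m g p c k).totalDegree)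
    (hmon : ∀ k, 1 ≤ k → k ≤ m →
      (keyedF m g p c k).coeff (Finsupp.single (((k - 1 : ℕ)) : Fin (m + 1))
        ((keyedF m g p c k).totalDegree)) ≠ 0) :
    (∀ i : ℕ, i < m →
      (substY m g p (sMono m g p c i)).natDegree
        = ∏ k ∈ Finset.range (m + 1), (keyedF m g p c k).totalDegree
          - ∏ k ∈ Finset.range (i + 1), (keyedF m g p c k).totalDegree)
    ∧ ∀ i : ℕ, i < m → ∀ a : Fin (m + 1) →₀ ℕ,
        a ((m : ℕ) : Fin (m + 1)) < (keyedF m g p c 0).totalDegree →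
        (∀ v : ℕ, v < m →
          a ((v : ℕ) : Fin (m + 1)) < (keyedF m g p c (v + 1)).totalDegree) →
        expDeg a ≤ expDeg (sMono m g p c i) →
        (substY m g p a).natDegree ≤ (substY m g p (sMono m g p c i)).natDegree
          ∧ (a ≠ sMono m g p c i →
              (substY m g p a).natDegree < (substY m g p (sMono m g p c i)).natDegree) := by
  set d : ℕ → ℕ := fun k => (keyedF m g p c k).totalDegree
  have hd : ∀ k < m + 1, 0 < d k := fun k hk => Nat.lt_of_lt_of_le two_pos (hdeg k (by omega))
  have hsubst := natDegree_substY (fun k hk => hd k (by omega)) (natDegree_ghat hdeg hmon)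
  have hs : ∀ i, ∀ k < m + 1, expDigits (sMono m g p c i) k = topDigits d (i + 1) k :=
    fun i k hk => expDigits_sMono (by omega)
  refine ⟨fun i hi => ?_, fun i hi a hay hax hle => ?_⟩
  · rw [hsubst, mixedRadixValue_congr (hs i),
      ← mixedRadixValue_topDigits_add hd (by omega : i + 1 ≤ m + 1), Nat.add_sub_cancel]
  · have hb : ∀ k < m + 1, expDigits a k < d k := by
      rintro (_ | j) hj
      exacts [hay, hax j (by omega)]
    have hsum : ∑ k ∈ range (m + 1), expDigits a k
        ≤ ∑ k ∈ range (m + 1), topDigits d (i + 1) k := by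
      rwa [sum_range_expDigits, ← sum_congr rfl fun k hk => hs i k (mem_range.mp hk),
        sum_range_expDigits]
    rw [hsubst, hsubst, mixedRadixValue_congr (hs i)]
    rcases mixedRadixValue_lt_topDigits (by omega) hb hsum with heq | hlt
    · have ha : a = sMono m g p c i :=
        eq_of_expDigits_eq fun k hk => (heq k hk).trans (hs i k hk).symm
      exact ⟨(mixedRadixValue_congr heq).le, fun hne => absurd ha hne⟩
    · exact ⟨hlt.le, fun _ => hlt⟩

/-- (`n = m + 1 ≥ 2`.) (a) `deg ŝ_i = ∏_{k=1}^n d_k - ∏_{k=1}^i d_k`;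
(b) any monomial `t` outside the DRL initial ideal with `deg t ≤ deg s_i` satisfies
`deg t̂ ≤ deg ŝ_i`, strictly if `t ≠ s_i`. -/
theorem stmt_10 {K : Type*} [Field K] (m : ℕ) (hm : 1 ≤ m)
    (g : ℕ → MvPolynomial (Fin 2) K) (p c : K)
    (hgnc : ∀ k ≤ m, 0 < (g k).totalDegree)
    (hzero : ∃ z : Fin (m + 1) → K, ∀ k ≤ m, eval z (keyedF m g p c k) = 0)
    (hdeg : ∀ k ≤ m, 2 ≤ (keyedF m g p c k).totalDegree)
    (hmon : ∀ k, 1 ≤ k → k ≤ m →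
      (keyedF m g p c k).coeff (Finsupp.single (((k - 1 : ℕ)) : Fin (m + 1))
        ((keyedF m g p c k).totalDegree)) ≠ 0) :
    (∀ i : ℕ, i < m →
      (substY m g p (sMono m g p c i)).natDegree
        = ∏ k ∈ Finset.range (m + 1), (keyedF m g p c k).totalDegree
          - ∏ k ∈ Finset.range (i + 1), (keyedF m g p c k).totalDegree)
    ∧ ∀ i : ℕ, i < m → ∀ a : Fin (m + 1) →₀ ℕ,
        a ((m : ℕ) : Fin (m + 1)) < (keyedF m g p c 0).totalDegree →
        (∀ v : ℕ, v < m →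
          a ((v : ℕ) : Fin (m + 1)) < (keyedF m g p c (v + 1)).totalDegree) →
        expDeg a ≤ expDeg (sMono m g p c i) →
        (substY m g p a).natDegree ≤ (substY m g p (sMono m g p c i)).natDegree
          ∧ (a ≠ sMono m g p c i →
              (substY m g p a).natDegree < (substY m g p (sMono m g p c i)).natDegree) :=
  stmt_10_general m g p c hdeg hmon
end
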